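/- arXiv:1310.7536 — 4 statements merged into one kernel-verified Lean document; each statement's English description precedes it below -/
import Mathlib

section
/- If C' ⊆ {0,1,2}^m is a single-error-correcting code for the channel 𝒯, then C = 𝔖^m(C') ⊆ {0,1}^{2m} satisfies Δ(x,y) ≥ 2 for all distinct x, y ∈ C, i.e., C is a 1-code of length 2m for the binary asymmetric channel. -/
/-- `N(x,y) = Σᵢ max(yᵢ - xᵢ, 0)` for binary words viewed in `ℤⁿ`. -/
def Nasym {n : ℕ} (x y : Fin n → Fin 2) : ℤ :=
  ∑ i, max (((y i : ℕ) : ℤ) - ((x i : ℕ) : ℤ)) 0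

/-- The asymmetric distance `Δ(x,y) = max(N(x,y), N(y,x))`. -/
def Dasym {n : ℕ} (x y : Fin n → Fin 2) : ℤ :=
  max (Nasym x y) (Nasym y x)

/-- The map `𝔖̃` on a binary pair: `00 ↦ 0`, `11 ↦ 0`, `01 ↦ 1`, `10 ↦ 2`. -/
def Stilde2 (p : Fin 2 × Fin 2) : Fin 3 :=
  if p.1 = p.2 then 0 else if p.1 = 0 then 1 else 2

/-- `𝔖` sends a ternary symbol `t` to the set of binary pairs mapping to it under `𝔖̃`. -/
def Sset (t : Fin 3) : Set (Fin 2 × Fin 2) := {p | Stilde2 p = t}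

/-- Membership `u ∈ 𝔖^m(c)`. -/
def Smem {m : ℕ} (c : Fin m → Fin 3) (u : Fin (2 * m) → Fin 2) : Prop :=
  ∀ j : Fin m,
    (u ⟨2 * (j : ℕ), by have := j.isLt; omega⟩,
     u ⟨2 * (j : ℕ) + 1, by have := j.isLt; omega⟩) ∈ Sset (c j)

/-- The single-symbol transitions of the ternary channel `𝒯`:
`1 → 0`, `0 → 1`, `0 → 2`, `2 → 0`. -/
def Ttrans (a b : Fin 3) : Prop :=
  (a = 1 ∧ b = 0) ∨ (a = 0 ∧ b = 1) ∨ (a = 0 ∧ b = 2) ∨ (a = 2 ∧ b = 0)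

/-- The `𝒯`-ball of `c`: words obtained from `c` by applying a `𝒯`-transition in at
most one coordinate (including `c` itself). -/
def TBall {m : ℕ} (c : Fin m → Fin 3) : Set (Fin m → Fin 3) :=
  {d | d = c ∨ ∃ i, Ttrans (c i) (d i) ∧ ∀ j, j ≠ i → d j = c j}

/-! The channel `𝒯` moves a symbol one step along the path `1 — 0 — 2`, so `TBall c` is the
unit ball of the induced `ℓ¹` distance on `{0,1,2}^m`, and two such balls meet as soon as their
centres are at distance at most `2`. Under `𝔖̃` the pair `(a, b)` lands at position `a - b` on that
path, hence the distance between `c` and `c'` is at most the Hamming distance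
`N(x,y) + N(y,x) ≤ 2 Δ(x,y)` of any of their preimages `x`, `y`. So `Δ(x,y) ≤ 1` forces `c = c'`,
and two distinct preimages of the same word differ in some block `00 ↔ 11`, which costs `2` in one
direction. -/

open Finset Function

def ternPos : Fin 3 → ℤ := ![0, -1, 1]

def ternDist (a b : Fin 3) : ℕ := (ternPos a - ternPos b).natAbs

def ternWordDist {m : ℕ} (c d : Fin m → Fin 3) : ℕ := ∑ j, ternDist (c j) (d j)

theorem ternDist_eq_zero_iff {a b : Fin 3} : ternDist a b = 0 ↔ a = b := by
  revert a b; decide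

@[simp]
theorem ternDist_self (a : Fin 3) : ternDist a a = 0 := ternDist_eq_zero_iff.mpr rfl

theorem ternDist_pos {a b : Fin 3} (h : a ≠ b) : 0 < ternDist a b :=
  Nat.pos_of_ne_zero (mt ternDist_eq_zero_iff.mp h)

theorem ternDist_comm (a b : Fin 3) : ternDist a b = ternDist b a := by
  revert a b; decide

theorem Ttrans_iff_ternDist_eq_one {a b : Fin 3} : Ttrans a b ↔ ternDist a b = 1 := by
  unfold Ttrans; revert a b; decide

theorem exists_ternDist_eq_one_of_ne {a b : Fin 3} (h : a ≠ b) :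
    ∃ t, ternDist a t = 1 ∧ ternDist b t + 1 = ternDist b a := by
  revert a b; decide

@[simp]
theorem ternWordDist_self {m : ℕ} (c : Fin m → Fin 3) : ternWordDist c c = 0 := by
  simp [ternWordDist]

theorem ternWordDist_comm {m : ℕ} (c d : Fin m → Fin 3) :
    ternWordDist c d = ternWordDist d c := by
  simp only [ternWordDist, ternDist_comm]

theorem ternWordDist_update_right {m : ℕ} (e c : Fin m → Fin 3) (j : Fin m) (t : Fin 3) :
    ternWordDist e (update c j t) + ternDist (e j) (c j) = ternWordDist e c + ternDist (e j) t := by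
  simp only [ternWordDist, ← add_sum_erase _ _ (mem_univ j), update_self]
  rw [sum_congr rfl fun k hk => by rw [update_of_ne (ne_of_mem_erase hk)]]
  ring

theorem mem_TBall_iff_ternWordDist_le_one {m : ℕ} {c d : Fin m → Fin 3} :
    d ∈ TBall c ↔ ternWordDist c d ≤ 1 := by
  constructor
  · rintro (rfl | ⟨i, hi, hrest⟩)
    · simp
    · rw [ternWordDist, sum_eq_single i (fun j _ hj => by rw [hrest j hj, ternDist_self])
        (by simp)]
      exact (Ttrans_iff_ternDist_eq_one.mp hi).le
  · intro h
    by_cases hdc : d = c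
    · exact Or.inl hdc
    obtain ⟨i, hi⟩ := ne_iff.mp hdc
    have hrest : ∀ j, j ≠ i → d j = c j := by
      intro j hji
      by_contra hj
      have hpair := sum_le_sum_of_subset (f := fun k => ternDist (c k) (d k)) (subset_univ {i, j})
      rw [sum_pair hji.symm] at hpair
      have := ternDist_pos (Ne.symm hi)
      have := ternDist_pos (Ne.symm hj)
      simp only [ternWordDist] at h
      omega
    refine Or.inr ⟨i, Ttrans_iff_ternDist_eq_one.mpr ?_, hrest⟩
    have := single_le_sum (f := fun k => ternDist (c k) (d k)) (by simp) (mem_univ i)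
    have := ternDist_pos (Ne.symm hi)
    simp only [ternWordDist] at h
    omega

theorem TBall_inter_nonempty_of_ternWordDist_le_two {m : ℕ} {c c' : Fin m → Fin 3}
    (h : ternWordDist c c' ≤ 2) : (TBall c ∩ TBall c').Nonempty := by
  simp only [Set.Nonempty, Set.mem_inter_iff, mem_TBall_iff_ternWordDist_le_one]
  by_cases h1 : ternWordDist c c' ≤ 1
  · exact ⟨c, by simp, by rwa [ternWordDist_comm]⟩
  obtain ⟨j, hj⟩ : ∃ j, c j ≠ c' j := by
    by_contra! hcc
    simp [funext hcc] at h1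
  obtain ⟨t, hct, hc't⟩ := exists_ternDist_eq_one_of_ne hj
  refine ⟨update c j t, ?_, ?_⟩
  · have := ternWordDist_update_right c c j t
    simp only [ternDist_self, ternWordDist_self] at this
    omega
  · have hupd := ternWordDist_update_right c' c j t
    have hsymm := ternWordDist_comm c c'
    omega

theorem eq_of_ternWordDist_le_two {m : ℕ} {C' : Set (Fin m → Fin 3)}
    (hsec : ∀ c ∈ C', ∀ c' ∈ C', c ≠ c' → Disjoint (TBall c) (TBall c'))
    {c c' : Fin m → Fin 3} (hc : c ∈ C') (hc' : c' ∈ C') (h : ternWordDist c c' ≤ 2) :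
    c = c' := by
  by_contra hne
  exact Set.not_disjoint_iff_nonempty_inter.mpr (TBall_inter_nonempty_of_ternWordDist_le_two h)
    (hsec c hc c' hc' hne)

theorem sum_fin_two_mul {M : Type*} [AddCommMonoid M] {m : ℕ} (f : Fin (2 * m) → M) :
    ∑ i, f i = ∑ j : Fin m,
      (f ⟨2 * j, by have := j.isLt; omega⟩ + f ⟨2 * j + 1, by have := j.isLt; omega⟩) := by
  rw [← (finProdFinEquiv.trans (finCongr (mul_comm m 2))).sum_comp, Fintype.sum_prod_type]
  refine sum_congr rfl fun j _ => ?_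
  rw [Fin.sum_univ_two]
  congr 2 <;> ext <;> simp [finProdFinEquiv, add_comm]

def pairAt {m : ℕ} (x : Fin (2 * m) → Fin 2) (j : Fin m) : Fin 2 × Fin 2 :=
  (x ⟨2 * j, by have := j.isLt; omega⟩, x ⟨2 * j + 1, by have := j.isLt; omega⟩)

theorem pairAt_injective {m : ℕ} : Injective (pairAt (m := m)) := by
  intro x y h
  funext i
  have hj : (i : ℕ) / 2 < m := by omega
  have hxy := congrFun h ⟨i / 2, hj⟩
  simp only [pairAt, Prod.mk.injEq] at hxy
  rcases Nat.mod_two_eq_zero_or_one i with hi | hi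
  · convert hxy.1 using 2 <;> ext <;> simp <;> omega
  · convert hxy.2 using 2 <;> ext <;> simp <;> omega

def blockNasym (p q : Fin 2 × Fin 2) : ℤ :=
  max (((q.1 : ℕ) : ℤ) - ((p.1 : ℕ) : ℤ)) 0 + max (((q.2 : ℕ) : ℤ) - ((p.2 : ℕ) : ℤ)) 0

theorem blockNasym_nonneg (p q : Fin 2 × Fin 2) : 0 ≤ blockNasym p q :=
  add_nonneg (le_max_right _ _) (le_max_right _ _)

theorem ternDist_Stilde2_le (p q : Fin 2 × Fin 2) :
    (ternDist (Stilde2 p) (Stilde2 q) : ℤ) ≤ blockNasym p q + blockNasym q p := by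
  revert p q; decide

theorem two_le_blockNasym_of_Stilde2_eq {p q : Fin 2 × Fin 2} (hpq : p ≠ q)
    (h : Stilde2 p = Stilde2 q) : 2 ≤ blockNasym p q ∨ 2 ≤ blockNasym q p := by
  revert p q; decide

theorem Nasym_eq_sum_blockNasym {m : ℕ} (x y : Fin (2 * m) → Fin 2) :
    Nasym x y = ∑ j, blockNasym (pairAt x j) (pairAt y j) :=
  sum_fin_two_mul _

theorem blockNasym_le_Nasym {m : ℕ} (x y : Fin (2 * m) → Fin 2) (j : Fin m) :
    blockNasym (pairAt x j) (pairAt y j) ≤ Nasym x y := by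
  rw [Nasym_eq_sum_blockNasym]
  exact single_le_sum (fun k _ => blockNasym_nonneg _ _) (mem_univ j)

theorem ternWordDist_le_Nasym_add {m : ℕ} {c c' : Fin m → Fin 3} {x y : Fin (2 * m) → Fin 2}
    (hx : Smem c x) (hy : Smem c' y) : (ternWordDist c c' : ℤ) ≤ Nasym x y + Nasym y x := by
  rw [Nasym_eq_sum_blockNasym, Nasym_eq_sum_blockNasym, ← sum_add_distrib, ternWordDist,
    Nat.cast_sum]
  gcongr with j
  rw [← hx j, ← hy j]
  exact ternDist_Stilde2_le _ _

/-- If `C' ⊆ {0,1,2}^m` is single-error-correcting for the channel `𝒯` (pairwise disjoint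
`𝒯`-balls), then `C = 𝔖^m(C')` is a `1`-code of length `2m`: `Δ(x,y) ≥ 2` for all
distinct `x, y ∈ C`. -/
theorem image_of_T_sec_is_one_code (m : ℕ) (C' : Set (Fin m → Fin 3))
    (hsec : ∀ c ∈ C', ∀ c' ∈ C', c ≠ c' → Disjoint (TBall c) (TBall c')) :
    ∀ x y : Fin (2 * m) → Fin 2,
      (∃ c ∈ C', Smem c x) → (∃ c ∈ C', Smem c y) → x ≠ y →
      2 ≤ Dasym x y := by
  rintro x y ⟨c, hc, hx⟩ ⟨c', hc', hy⟩ hxy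
  by_contra! hlt
  obtain ⟨hxy1, hyx1⟩ := max_lt_iff.mp hlt
  obtain rfl : c = c' := eq_of_ternWordDist_le_two hsec hc hc' (by
    have := ternWordDist_le_Nasym_add hx hy
    omega)
  obtain ⟨j, hj⟩ : ∃ j, pairAt x j ≠ pairAt y j := by
    by_contra! h
    exact hxy (pairAt_injective (funext h))
  rcases two_le_blockNasym_of_Stilde2_eq hj ((hx j).trans (hy j).symm) with h | h
  · have := blockNasym_le_Nasym x y j
    omega
  · have := blockNasym_le_Nasym y x j
    omega
end

section
/- If C' ⊆ {0,1,2}^m is a ternary code of minimum Hamming distance at least 3, then C = 𝔖^m(C') ⊆ {0,1}^{2m} satisfies Δ(x,y) ≥ 2 for all distinct x, y ∈ C, i.e., C is a 1-code of length 2m for the binary asymmetric channel. -/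
open scoped Finset

section Asymmetric

variable {n : ℕ} (x y : Fin n → Fin 2)

theorem Nasym_eq_card : Nasym x y = #{i | x i < y i} := by
  rw [Nasym, Finset.card_filter]
  push_cast
  refine Finset.sum_congr rfl fun i _ => ?_
  generalize x i = a, y i = b
  revert a b
  decide

theorem Nasym_add_Nasym : Nasym x y + Nasym y x = hammingDist x y := by
  rw [Nasym_eq_card, Nasym_eq_card, hammingDist, ← Nat.cast_add, ← Finset.card_union_of_disjoint
    (Finset.disjoint_filter.2 fun i _ h => (lt_asymm h))]
  congr 2
  ext i
  simp only [Finset.mem_filter, Finset.mem_union, ne_iff_lt_or_gt, Finset.mem_univ, true_and]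

theorem two_le_Dasym_of_three_le_hammingDist (h : 3 ≤ hammingDist x y) : 2 ≤ Dasym x y := by
  have := Nasym_add_Nasym x y
  rw [Dasym]
  omega

theorem two_le_Nasym_of_lt_of_lt {i₀ i₁ : Fin n} (hi : i₀ ≠ i₁) (h₀ : x i₀ < y i₀)
    (h₁ : x i₁ < y i₁) : 2 ≤ Nasym x y := by
  rw [Nasym_eq_card]
  calc (2 : ℤ) = #{i₀, i₁} := by rw [Finset.card_pair hi]; rfl
    _ ≤ #{i | x i < y i} := by
      gcongr
      simp [Finset.insert_subset_iff, h₀, h₁]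

theorem two_le_Dasym_of_ne_of_eq_of_eq {i₀ i₁ : Fin n} (hi : i₀ ≠ i₁) (hne : x i₀ ≠ y i₀)
    (hx : x i₀ = x i₁) (hy : y i₀ = y i₁) : 2 ≤ Dasym x y := by
  rcases lt_or_gt_of_ne hne with h | h
  · exact le_max_of_le_left (two_le_Nasym_of_lt_of_lt x y hi h (hx ▸ hy ▸ h))
  · exact le_max_of_le_right (two_le_Nasym_of_lt_of_lt y x hi h (hx ▸ hy ▸ h))

end Asymmetric

theorem hammingDist_comp_le_of_injective {ι κ β : Type*} [Fintype ι] [Fintype κ] [DecidableEq β]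
    {f : κ → ι} (hf : Function.Injective f) (x y : ι → β) :
    hammingDist (x ∘ f) (y ∘ f) ≤ hammingDist x y :=
  Finset.card_le_card_of_injOn f (fun k hk => by simpa using hk) hf.injOn

theorem hammingDist_curry_le {ι κ β : Type*} [Fintype ι] [Fintype κ] [DecidableEq ι]
    [DecidableEq β] (x y : ι × κ → β) :
    hammingDist (fun i k => x (i, k)) (fun i k => y (i, k)) ≤ hammingDist x y := by
  calc hammingDist (fun i k => x (i, k)) (fun i k => y (i, k))
      ≤ #(({p | x p ≠ y p} : Finset (ι × κ)).image Prod.fst) := by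
        refine Finset.card_le_card fun i hi => ?_
        obtain ⟨k, hk⟩ := Function.ne_iff.1 (Finset.mem_filter.1 hi).2
        exact Finset.mem_image.2 ⟨(i, k), by simpa using hk, rfl⟩
    _ ≤ hammingDist x y := Finset.card_image_le

theorem Stilde2_eq_Stilde2_iff_of_ne {p q : Fin 2 × Fin 2} (hpq : p ≠ q) :
    Stilde2 p = Stilde2 q ↔ p.1 = p.2 ∧ q.1 = q.2 := by
  revert p q; decide

/-- Position `2j + k` of a binary word of length `2m` is bit `k` of its `j`-th block. -/
def blockEquiv (m : ℕ) : Fin m × Fin 2 ≃ Fin (2 * m) :=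
  finProdFinEquiv.trans (finCongr (Nat.mul_comm m 2))

def ternaryOfBlocks {m : ℕ} (u : Fin (2 * m) → Fin 2) : Fin m → Fin 3 :=
  fun j => Stilde2 (u (blockEquiv m (j, 0)), u (blockEquiv m (j, 1)))

theorem Smem_iff {m : ℕ} (c : Fin m → Fin 3) (u : Fin (2 * m) → Fin 2) :
    Smem c u ↔ ternaryOfBlocks u = c := by
  rw [funext_iff]
  refine forall_congr' fun j => ?_
  simp [Sset, ternaryOfBlocks, blockEquiv, finProdFinEquiv, Nat.add_comm]

theorem hammingDist_ternaryOfBlocks_le {m : ℕ} (x y : Fin (2 * m) → Fin 2) :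
    hammingDist (ternaryOfBlocks x) (ternaryOfBlocks y) ≤ hammingDist x y :=
  calc hammingDist (ternaryOfBlocks x) (ternaryOfBlocks y)
      ≤ hammingDist (fun j k => x (blockEquiv m (j, k))) (fun j k => y (blockEquiv m (j, k))) :=
        hammingDist_comp_le_hammingDist (x := fun j k => x (blockEquiv m (j, k)))
          (y := fun j k => y (blockEquiv m (j, k))) fun _ v => Stilde2 (v 0, v 1)
    _ ≤ hammingDist (x ∘ blockEquiv m) (y ∘ blockEquiv m) :=
        hammingDist_curry_le (x ∘ blockEquiv m) (y ∘ blockEquiv m)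
    _ ≤ hammingDist x y := hammingDist_comp_le_of_injective (blockEquiv m).injective x y

theorem two_le_Dasym_of_ternaryOfBlocks_eq {m : ℕ} {x y : Fin (2 * m) → Fin 2} (hxy : x ≠ y)
    (hc : ternaryOfBlocks x = ternaryOfBlocks y) : 2 ≤ Dasym x y := by
  obtain ⟨i, hi⟩ := Function.ne_iff.1 hxy
  obtain ⟨⟨j, k⟩, rfl⟩ := (blockEquiv m).surjective i
  have hblock : (x (blockEquiv m (j, 0)), x (blockEquiv m (j, 1))) ≠
      (y (blockEquiv m (j, 0)), y (blockEquiv m (j, 1))) := by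
    fin_cases k <;> simp_all
  obtain ⟨hx, hy⟩ := (Stilde2_eq_Stilde2_iff_of_ne hblock).1 (congrFun hc j)
  refine two_le_Dasym_of_ne_of_eq_of_eq x y (by simp) (fun h => hblock ?_) hx hy
  rw [Prod.ext_iff]
  exact ⟨h, hx ▸ hy ▸ h⟩

/-- If `C' ⊆ {0,1,2}^m` has minimum Hamming distance at least 3, then `C = 𝔖^m(C')` is a
`1`-code of length `2m`: `Δ(x,y) ≥ 2` for all distinct `x, y ∈ C`. -/
theorem image_of_dist3_is_one_code (m : ℕ) (C' : Set (Fin m → Fin 3))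
    (hdist : ∀ c ∈ C', ∀ c' ∈ C', c ≠ c' → 3 ≤ hammingDist c c') :
    ∀ x y : Fin (2 * m) → Fin 2,
      (∃ c ∈ C', Smem c x) → (∃ c ∈ C', Smem c y) → x ≠ y →
      2 ≤ Dasym x y := by
  rintro x y ⟨c, hc, hx⟩ ⟨c', hc', hy⟩ hxy
  rw [Smem_iff] at hx hy
  subst hx hy
  by_cases hcc : ternaryOfBlocks x = ternaryOfBlocks y
  · exact two_le_Dasym_of_ternaryOfBlocks_eq hxy hcc
  · exact two_le_Dasym_of_three_le_hammingDist x y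
      ((hdist _ hc _ hc' hcc).trans (hammingDist_ternaryOfBlocks_le x y))
end

section
/- Let C' ⊆ {0,1} × {0,1,2}^m and for (b,c) ∈ {0,1} × {0,1,2}^m let its 𝒵×𝒯^m-ball consist of all words obtained by applying at most one transition in at most one coordinate, where in the first coordinate only the transition 1→0 is allowed and in each of the remaining m coordinates the 𝒯-transitions 1→0, 0→1, 0→2, 2→0 are allowed. If these balls are pairwise disjoint for the codewords of C' (C' is single-error-correcting for the channel 𝒵×𝒯^m), then C = {(b,u) ∈ {0,1}^{2m+1} : (b,c) ∈ C' and u ∈ 𝔖^m(c)} satisfies Δ(x,y) ≥ 2 for all distinct x, y ∈ C, i.e., C is a 1-code of length 2m+1. -/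
/-- The `𝒵 × 𝒯^m`-ball of a word `w = (b, c) ∈ {0,1} × {0,1,2}^m`: words obtained from `w`
by applying at most one transition in at most one coordinate, where in the first (binary)
coordinate only `1 → 0` is allowed and in the ternary coordinates the `𝒯`-transitions
are allowed. -/
def ZTBall {m : ℕ} (w : Fin 2 × (Fin m → Fin 3)) : Set (Fin 2 × (Fin m → Fin 3)) :=
  {d | d = w ∨
       (w.1 = 1 ∧ d.1 = 0 ∧ d.2 = w.2) ∨
       (d.1 = w.1 ∧ ∃ i, Ttrans (w.2 i) (d.2 i) ∧ ∀ j, j ≠ i → d.2 j = w.2 j)}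

/-!
If `Δ(x, y) ≤ 1`, the meet `x ⊓ y` arises from each of `x` and `y` by lowering at most one
bit. Lowering one bit of a word of `{0,1} × ({0,1}²)^m` moves its image under `𝔖̃` along
one `𝒵 × 𝒯^m`-transition (`11 → 01, 10` is `0 → 1, 2`, and `01, 10 → 00` is `1, 2 → 0`),
so the image of `x ⊓ y` lies in the balls of both codewords, which must therefore coincide.
Two distinct binary words with the same image differ in a pair `00` versus `11`, so `Δ ≥ 2`.
-/

open Function Finset

namespace ZTCode

variable {m n : ℕ}

def ZBall (x : Fin n → Fin 2) : Set (Fin n → Fin 2) :=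
  {z | z = x ∨ ∃ i, x i = 1 ∧ z = update x i 0}

lemma max_sub_zero_eq_ite : ∀ a b : Fin 2,
    max (((b : ℕ) : ℤ) - ((a : ℕ) : ℤ)) 0 = if a < b then 1 else 0 := by
  decide

lemma Nasym_eq_card (x y : Fin n → Fin 2) : Nasym x y = #{i | x i < y i} := by
  simp only [Nasym, max_sub_zero_eq_ite, sum_boole]

lemma two_le_Nasym {x y : Fin n → Fin 2} {i j : Fin n} (hij : i ≠ j)
    (hi : x i < y i) (hj : x j < y j) : 2 ≤ Nasym x y := by
  rw [Nasym_eq_card]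
  exact_mod_cast one_lt_card.mpr ⟨i, by simpa using hi, j, by simpa using hj, hij⟩

lemma inf_mem_ZBall {x y : Fin n → Fin 2} (h : Nasym x y < 2) : x ⊓ y ∈ ZBall y := by
  by_cases hlt : ∃ i, x i < y i
  · obtain ⟨i, hi⟩ := hlt
    have hxi : x i = 0 := by omega
    have hyi : y i = 1 := by omega
    refine Or.inr ⟨i, hyi, funext fun j => ?_⟩
    rcases eq_or_ne j i with rfl | hji
    · simp [hxi, hyi]
    · have hj : y j ≤ x j := not_lt.mp fun hj => by linarith [two_le_Nasym hji hj hi]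
      simp [update_of_ne hji, hj]
  · push Not at hlt
    exact Or.inl (funext fun i => by simp [hlt i])

def pairIdx (m : ℕ) : Fin m × Fin 2 ≃ Fin (2 * m) where
  toFun p := ⟨2 * p.1 + p.2, by omega⟩
  invFun i := (⟨i / 2, by omega⟩, ⟨i % 2, by omega⟩)
  left_inv := by
    rintro ⟨j, t⟩
    ext <;> simp <;> omega
  right_inv := by
    rintro ⟨i, hi⟩
    ext
    simp
    omega

def pairAt (u : Fin (2 * m) → Fin 2) (j : Fin m) : Fin 2 × Fin 2 :=
  (u (pairIdx m (j, 0)), u (pairIdx m (j, 1)))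

lemma pairAt_injective : Injective (pairAt (m := m)) := by
  intro u v h
  funext k
  obtain ⟨⟨j, t⟩, rfl⟩ := (pairIdx m).surjective k
  have hj := congrFun h j
  fin_cases t
  · exact congrArg Prod.fst hj
  · exact congrArg Prod.snd hj

def Stilde (u : Fin (2 * m) → Fin 2) : Fin m → Fin 3 := fun j => Stilde2 (pairAt u j)

lemma smem_iff {c : Fin m → Fin 3} {u : Fin (2 * m) → Fin 2} : Smem c u ↔ Stilde u = c :=
  funext_iff.symm

lemma Ttrans_Stilde2_lower_fst : ∀ p : Fin 2 × Fin 2,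
    p.1 = 1 → Ttrans (Stilde2 p) (Stilde2 (0, p.2)) := by
  unfold Ttrans; decide

lemma Ttrans_Stilde2_lower_snd : ∀ p : Fin 2 × Fin 2,
    p.2 = 1 → Ttrans (Stilde2 p) (Stilde2 (p.1, 0)) := by
  unfold Ttrans; decide

lemma Stilde2_eq_Stilde2 : ∀ p q : Fin 2 × Fin 2, Stilde2 p = Stilde2 q → p ≠ q →
    (p.1 < q.1 ∧ p.2 < q.2) ∨ (q.1 < p.1 ∧ q.2 < p.2) := by
  decide

lemma Ttrans_Stilde_update {u : Fin (2 * m) → Fin 2} {k : Fin (2 * m)} (hk : u k = 1) :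
    ∃ j, Ttrans (Stilde u j) (Stilde (update u k 0) j) ∧
      ∀ j', j' ≠ j → Stilde (update u k 0) j' = Stilde u j' := by
  obtain ⟨⟨j, t⟩, rfl⟩ := (pairIdx m).surjective k
  have hne : ∀ p q, (p, q) ≠ (j, t) → pairIdx m (p, q) ≠ pairIdx m (j, t) :=
    fun _ _ h => (pairIdx m).injective.ne h
  refine ⟨j, ?_, fun j' hj' => ?_⟩
  · fin_cases t
    · simpa [Stilde, pairAt, update_of_ne (hne j 1 (by simp))] using
        Ttrans_Stilde2_lower_fst (pairAt u j) hk
    · simpa [Stilde, pairAt, update_of_ne (hne j 0 (by simp))] using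
        Ttrans_Stilde2_lower_snd (pairAt u j) hk
  · simp only [Stilde, pairAt]
    rw [update_of_ne (hne j' 0 (by simp [hj'])), update_of_ne (hne j' 1 (by simp [hj']))]

def toZT (x : Fin (2 * m + 1) → Fin 2) : Fin 2 × (Fin m → Fin 3) := (x 0, Stilde (Fin.tail x))

lemma toZT_cons_of_smem {b : Fin 2} {c : Fin m → Fin 3} {u : Fin (2 * m) → Fin 2}
    (h : Smem c u) : toZT (Fin.cons b u) = (b, c) := by
  simp [toZT, smem_iff.mp h]

lemma toZT_mem_ZTBall {x z : Fin (2 * m + 1) → Fin 2} (hz : z ∈ ZBall x) :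
    toZT z ∈ ZTBall (toZT x) := by
  obtain rfl | ⟨i, hi, rfl⟩ := hz
  · exact Or.inl rfl
  induction i using Fin.cases with
  | zero => exact Or.inr (Or.inl ⟨hi, by simp [toZT], by simp [toZT, Fin.tail_update_zero]⟩)
  | succ k =>
    obtain ⟨j, hj, hoff⟩ := Ttrans_Stilde_update (u := Fin.tail x) hi
    have hz0 : update x k.succ 0 0 = x 0 := update_of_ne (Fin.succ_ne_zero k).symm _ _
    refine Or.inr (Or.inr ⟨hz0, j, ?_, ?_⟩) <;> simpa only [toZT, Fin.tail_update_succ]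

lemma two_le_Dasym_of_toZT_eq {x y : Fin (2 * m + 1) → Fin 2} (h : toZT x = toZT y)
    (hxy : x ≠ y) : 2 ≤ Dasym x y := by
  have h0 : x 0 = y 0 := congrArg Prod.fst h
  have htail : Fin.tail x ≠ Fin.tail y := fun ht =>
    hxy (by rw [← Fin.cons_self_tail x, ← Fin.cons_self_tail y, ht, h0])
  obtain ⟨j, hj⟩ := Function.ne_iff.mp (pairAt_injective.ne htail)
  have hS : Stilde2 (pairAt (Fin.tail x) j) = Stilde2 (pairAt (Fin.tail y) j) :=
    congrFun (congrArg Prod.snd h) j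
  have h01 : (pairIdx m (j, 0)).succ ≠ (pairIdx m (j, 1)).succ :=
    (Fin.succ_injective _).ne ((pairIdx m).injective.ne (by simp))
  rcases Stilde2_eq_Stilde2 _ _ hS hj with ⟨h0, h1⟩ | ⟨h0, h1⟩
  · exact (two_le_Nasym h01 h0 h1).trans (le_max_left _ _)
  · exact (two_le_Nasym h01 h0 h1).trans (le_max_right _ _)

end ZTCode

open ZTCode

/-- If `C' ⊆ {0,1} × {0,1,2}^m` is single-error-correcting for the channel `𝒵 × 𝒯^m`
(pairwise disjoint balls), then the binary code
`C = {(b,u) : (b,c) ∈ C', u ∈ 𝔖^m(c)} ⊆ {0,1}^{2m+1}` is a `1`-code of length `2m+1`: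
`Δ(x,y) ≥ 2` for all distinct `x, y ∈ C`. -/
theorem image_of_ZT_sec_is_one_code (m : ℕ) (C' : Set (Fin 2 × (Fin m → Fin 3)))
    (hsec : ∀ w ∈ C', ∀ w' ∈ C', w ≠ w' → Disjoint (ZTBall w) (ZTBall w')) :
    ∀ x y : Fin (2 * m + 1) → Fin 2,
      (∃ w ∈ C', ∃ u : Fin (2 * m) → Fin 2, Smem w.2 u ∧ x = Fin.cons w.1 u) →
      (∃ w ∈ C', ∃ u : Fin (2 * m) → Fin 2, Smem w.2 u ∧ y = Fin.cons w.1 u) →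
      x ≠ y → 2 ≤ Dasym x y := by
  rintro x y ⟨w, hw, u, hu, rfl⟩ ⟨w', hw', v, hv, rfl⟩ hxy
  set x : Fin (2 * m + 1) → Fin 2 := Fin.cons w.1 u
  set y : Fin (2 * m + 1) → Fin 2 := Fin.cons w'.1 v
  have hx : toZT x = w := toZT_cons_of_smem hu
  have hy : toZT y = w' := toZT_cons_of_smem hv
  by_contra! hlt
  obtain ⟨hxy', hyx⟩ := max_lt_iff.mp hlt
  have hmeet_w : toZT (x ⊓ y) ∈ ZTBall w :=
    hx ▸ toZT_mem_ZTBall (inf_comm y x ▸ inf_mem_ZBall hyx)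
  have hmeet_w' : toZT (x ⊓ y) ∈ ZTBall w' := hy ▸ toZT_mem_ZTBall (inf_mem_ZBall hxy')
  have hww : w = w' := by
    by_contra hne
    exact Set.disjoint_left.mp (hsec w hw w' hw' hne) hmeet_w hmeet_w'
  exact hlt.not_ge (two_le_Dasym_of_toZT_eq (hx.trans (hww.trans hy.symm)) hxy)
end

section
/- Let C'₀, C'₁ ⊆ {0,1,2}^m each be single-error-correcting codes for the channel 𝒯, and suppose that for every c₀ ∈ C'₀ and c₁ ∈ C'₁ one has c₁ ∉ B_𝒯(c₀) and c₀ ∉ B_𝒯(c₁) (in particular c₀ ≠ c₁). Then C = {(0,u) : c ∈ C'₀, u ∈ 𝔖^m(c)} ∪ {(1,u) : c ∈ C'₁, u ∈ 𝔖^m(c)} ⊆ {0,1}^{2m+1} satisfies Δ(x,y) ≥ 2 for all distinct x, y ∈ C, i.e., C is a 1-code of length 2m+1 for the binary asymmetric channel. -/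
/-!
Read a binary word of length `2m` pair by pair through `𝔖̃`; flipping one bit then changes the
ternary word by exactly one `𝒯`-transition. If `Δ(x, y) ≤ 1` and `x, y` have the same leading
bit, both tails lie within one flip of their meet `u ⊓ v`, so the `𝒯`-balls of their ternary
words meet and the ternary words coincide; but two distinct words of one `𝔖^m(c)` differ by
`00`/`11` in some pair, which forces `Δ ≥ 2`. If the leading bits differ, the leading coordinate
already contributes `1`, so the tails differ by at most one flip and one ternary word lies in the
`𝒯`-ball of the other.
-/

open Finset Function

lemma hammingDist_inf_right {ι β : Type*} [Fintype ι] [LinearOrder β] (u v : ι → β) :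
    hammingDist u (u ⊓ v) = #{i | v i < u i} := by
  simp only [hammingDist, Pi.inf_apply, ne_eq, left_eq_inf, not_le]

lemma Nasym_eq_card_s8 {n : ℕ} (u v : Fin n → Fin 2) : Nasym u v = #{i | u i < v i} := by
  have hterm : ∀ a b : Fin 2,
      max (((b : ℕ) : ℤ) - ((a : ℕ) : ℤ)) 0 = if a < b then 1 else 0 := by decide
  simp only [Nasym, hterm, sum_boole]

lemma Nasym_cons {n : ℕ} (a b : Fin 2) (u v : Fin n → Fin 2) :
    Nasym (Fin.cons a u : Fin (n + 1) → Fin 2) (Fin.cons b v) =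
      max (((b : ℕ) : ℤ) - ((a : ℕ) : ℤ)) 0 + Nasym u v := by
  simp [Nasym, Fin.sum_univ_succ]

lemma Dasym_cons_cons_self {n : ℕ} (a : Fin 2) (u v : Fin n → Fin 2) :
    Dasym (Fin.cons a u : Fin (n + 1) → Fin 2) (Fin.cons a v) = Dasym u v := by
  simp [Dasym, Nasym_cons]

lemma Ttrans_Stilde2_of_ne_fst : ∀ {a a' : Fin 2} (b : Fin 2), a ≠ a' →
    Ttrans (Stilde2 (a, b)) (Stilde2 (a', b)) := by unfold Ttrans; decide

lemma Ttrans_Stilde2_of_ne_snd : ∀ (a : Fin 2) {b b' : Fin 2}, b ≠ b' →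
    Ttrans (Stilde2 (a, b)) (Stilde2 (a, b')) := by unfold Ttrans; decide

lemma lt_and_lt_of_Stilde2_eq : ∀ {p q : Fin 2 × Fin 2}, Stilde2 p = Stilde2 q → p ≠ q →
    p.1 < q.1 ∧ p.2 < q.2 ∨ q.1 < p.1 ∧ q.2 < p.2 := by decide

section

variable {m : ℕ}

def pairFst (j : Fin m) : Fin (2 * m) := ⟨2 * j, by omega⟩

def pairSnd (j : Fin m) : Fin (2 * m) := ⟨2 * j + 1, by omega⟩

lemma pairFst_injective : Injective (pairFst (m := m)) := fun j j' h => by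
  simp only [pairFst, Fin.mk.injEq] at h; omega

lemma pairSnd_injective : Injective (pairSnd (m := m)) := fun j j' h => by
  simp only [pairSnd, Fin.mk.injEq] at h; omega

lemma pairFst_ne_pairSnd (j j' : Fin m) : pairFst j ≠ pairSnd j' := by
  simp only [pairFst, pairSnd, ne_eq, Fin.mk.injEq]; omega

lemma exists_eq_pairFst_or_eq_pairSnd (a : Fin (2 * m)) :
    ∃ j, a = pairFst j ∨ a = pairSnd j :=
  ⟨⟨a / 2, by omega⟩, by simp only [pairFst, pairSnd, Fin.ext_iff]; omega⟩

def Stilde (u : Fin (2 * m) → Fin 2) : Fin m → Fin 3 :=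
  fun j => Stilde2 (u (pairFst j), u (pairSnd j))

lemma smem_iff_Stilde_eq {c : Fin m → Fin 3} {u : Fin (2 * m) → Fin 2} :
    Smem c u ↔ Stilde u = c :=
  funext_iff.symm

lemma Stilde_update_mem_TBall (u : Fin (2 * m) → Fin 2) (a : Fin (2 * m))
    (b : Fin 2) : Stilde (update u a b) ∈ TBall (Stilde u) := by
  by_cases hb : b = u a
  · exact Or.inl (by rw [hb, update_eq_self])
  obtain ⟨j, rfl | rfl⟩ := exists_eq_pairFst_or_eq_pairSnd a
  · refine Or.inr ⟨j, ?_, fun j' hj' => ?_⟩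
    · simpa only [Stilde, update_self, update_of_ne (pairFst_ne_pairSnd j j).symm]
        using Ttrans_Stilde2_of_ne_fst _ (Ne.symm hb)
    · simp only [Stilde, update_of_ne (pairFst_injective.ne hj'),
        update_of_ne (pairFst_ne_pairSnd j j').symm]
  · refine Or.inr ⟨j, ?_, fun j' hj' => ?_⟩
    · simpa only [Stilde, update_self, update_of_ne (pairFst_ne_pairSnd j j)]
        using Ttrans_Stilde2_of_ne_snd _ (Ne.symm hb)
    · simp only [Stilde, update_of_ne (pairSnd_injective.ne hj'),
        update_of_ne (pairFst_ne_pairSnd j' j)]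

lemma Stilde_mem_TBall_of_hammingDist_le_one {u v : Fin (2 * m) → Fin 2}
    (h : hammingDist u v ≤ 1) : Stilde v ∈ TBall (Stilde u) := by
  rcases Nat.le_one_iff_eq_zero_or_eq_one.mp h with h | h
  · exact Or.inl (by rw [hammingDist_eq_zero.mp h])
  obtain ⟨a, ha⟩ := card_eq_one.mp h
  have hv : v = update u a (v a) := funext fun i => by
    by_cases hia : i = a
    · rw [hia, update_self]
    · rw [update_of_ne hia]
      simpa [hia, eq_comm] using Finset.ext_iff.mp ha i
  rw [hv]
  exact Stilde_update_mem_TBall u a (v a)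

lemma not_disjoint_TBall_Stilde {u v : Fin (2 * m) → Fin 2}
    (huv : Nasym u v ≤ 1) (hvu : Nasym v u ≤ 1) :
    ¬ Disjoint (TBall (Stilde u)) (TBall (Stilde v)) := by
  rw [Nasym_eq_card_s8] at huv hvu
  refine Set.not_disjoint_iff.mpr ⟨Stilde (u ⊓ v), ?_, ?_⟩
  · exact Stilde_mem_TBall_of_hammingDist_le_one (by rw [hammingDist_inf_right]; omega)
  · exact Stilde_mem_TBall_of_hammingDist_le_one
      (by rw [inf_comm, hammingDist_inf_right]; omega)

lemma Stilde_mem_TBall_of_Nasym {u v : Fin (2 * m) → Fin 2}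
    (huv : Nasym u v ≤ 0) (hvu : Nasym v u ≤ 1) : Stilde v ∈ TBall (Stilde u) := by
  rw [Nasym_eq_card_s8] at huv hvu
  have hinf : u ⊓ v = v := by
    rw [← hammingDist_eq_zero, hammingDist_comm, inf_comm, hammingDist_inf_right]; omega
  rw [← hinf]
  exact Stilde_mem_TBall_of_hammingDist_le_one (by rw [hammingDist_inf_right]; omega)

lemma two_le_Nasym_of_lt_pair {u v : Fin (2 * m) → Fin 2} (j : Fin m)
    (hfst : u (pairFst j) < v (pairFst j)) (hsnd : u (pairSnd j) < v (pairSnd j)) :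
    2 ≤ Nasym u v := by
  rw [Nasym_eq_card_s8]
  refine mod_cast (card_pair (pairFst_ne_pairSnd j j)).symm.le.trans (card_le_card fun i hi => ?_)
  rcases mem_insert.mp hi with rfl | hi
  · simpa using hfst
  · rw [mem_singleton.mp hi]; simpa using hsnd

lemma two_le_Dasym_of_Stilde_eq {u v : Fin (2 * m) → Fin 2}
    (h : Stilde u = Stilde v) (huv : u ≠ v) : 2 ≤ Dasym u v := by
  obtain ⟨a, ha⟩ := Function.ne_iff.mp huv
  obtain ⟨j, rfl | rfl⟩ := exists_eq_pairFst_or_eq_pairSnd a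
  all_goals
    have hpair : (u (pairFst j), u (pairSnd j)) ≠ (v (pairFst j), v (pairSnd j)) := by
      simp [ha]
    rcases lt_and_lt_of_Stilde2_eq (congrFun h j) hpair with ⟨h1, h2⟩ | ⟨h1, h2⟩
    · exact (two_le_Nasym_of_lt_pair j h1 h2).trans (le_max_left _ _)
    · exact (two_le_Nasym_of_lt_pair j h1 h2).trans (le_max_right _ _)

lemma two_le_Dasym_of_Stilde_mem {C : Set (Fin m → Fin 3)}
    (hC : ∀ c ∈ C, ∀ c' ∈ C, c ≠ c' → Disjoint (TBall c) (TBall c'))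
    {u v : Fin (2 * m) → Fin 2} (hu : Stilde u ∈ C) (hv : Stilde v ∈ C) (huv : u ≠ v) :
    2 ≤ Dasym u v := by
  by_cases h : Stilde u = Stilde v
  · exact two_le_Dasym_of_Stilde_eq h huv
  by_contra! hlt
  obtain ⟨h1, h2⟩ := max_le_iff.mp (show Dasym u v ≤ 1 by omega)
  exact not_disjoint_TBall_Stilde h1 h2 (hC _ hu _ hv h)

end

/-- If `C'₀, C'₁ ⊆ {0,1,2}^m` are each single-error-correcting for `𝒯`, and no codeword of
one lies in the `𝒯`-ball of a codeword of the other, then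
`C = 0·𝔖^m(C'₀) ∪ 1·𝔖^m(C'₁) ⊆ {0,1}^{2m+1}` is a `1`-code of length `2m+1`:
`Δ(x,y) ≥ 2` for all distinct `x, y ∈ C`. -/
theorem extended_ternary_is_one_code (m : ℕ) (C0 C1 : Set (Fin m → Fin 3))
    (h0 : ∀ c ∈ C0, ∀ c' ∈ C0, c ≠ c' → Disjoint (TBall c) (TBall c'))
    (h1 : ∀ c ∈ C1, ∀ c' ∈ C1, c ≠ c' → Disjoint (TBall c) (TBall c'))
    (hcross : ∀ c0 ∈ C0, ∀ c1 ∈ C1, c1 ∉ TBall c0 ∧ c0 ∉ TBall c1) :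
    ∀ x y : Fin (2 * m + 1) → Fin 2,
      ((∃ c ∈ C0, ∃ u : Fin (2 * m) → Fin 2, Smem c u ∧ x = Fin.cons 0 u) ∨
       (∃ c ∈ C1, ∃ u : Fin (2 * m) → Fin 2, Smem c u ∧ x = Fin.cons 1 u)) →
      ((∃ c ∈ C0, ∃ u : Fin (2 * m) → Fin 2, Smem c u ∧ y = Fin.cons 0 u) ∨
       (∃ c ∈ C1, ∃ u : Fin (2 * m) → Fin 2, Smem c u ∧ y = Fin.cons 1 u)) →
      x ≠ y → 2 ≤ Dasym x y := by
  intro x y hx hy hxy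
  rcases hx with ⟨c, hc, u, hu, rfl⟩ | ⟨c, hc, u, hu, rfl⟩ <;>
    rcases hy with ⟨c', hc', v, hv, rfl⟩ | ⟨c', hc', v, hv, rfl⟩ <;>
    rw [smem_iff_Stilde_eq] at hu hv <;> subst hu hv
  · rw [Dasym_cons_cons_self]
    exact two_le_Dasym_of_Stilde_mem h0 hc hc' (by rintro rfl; exact hxy rfl)
  · by_contra! hlt
    norm_num [Dasym, Nasym_cons] at hlt
    exact (hcross _ hc _ hc').1 (Stilde_mem_TBall_of_Nasym (by omega) (by omega))
  · by_contra! hlt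
    norm_num [Dasym, Nasym_cons] at hlt
    exact (hcross _ hc' _ hc).1 (Stilde_mem_TBall_of_Nasym (by omega) (by omega))
  · rw [Dasym_cons_cons_self]
    exact two_le_Dasym_of_Stilde_mem h1 hc hc' (by rintro rfl; exact hxy rfl)
end
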